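/- The proximal operator of σ·φ_QO* at w₀, where φ_QO*(w) = (‖ẑ‖/(2λ))‖w‖² on {⟨w, ẑ⟩ = 0} and +∞ elsewhere, equals (λ/(λ + σ‖ẑ‖))·(w₀ - P_ẑ(w₀)). -/

import Mathlib

open scoped RealInnerProductSpace

/-!
Write `f w = a‖w - w₀‖² + β‖w‖²` and `u = zh/‖zh‖`. Expanding around any point `c` gives
`f w = f c + 2⟪w - c, ∇f c / 2⟫ + (a + β)‖w - c‖²`. For `c = (a/(a+β))(w₀ - ⟪w₀, u⟫u)` the
half-gradient `a(c - w₀) + βc = -a⟪w₀, u⟫u` is normal to the constraint hyperplane `u^⊥`, which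
contains `c`, so on `u^⊥` the objective is `f c + (a + β)‖w - c‖²`. With `a = 1/(2σ)` and
`β = ‖zh‖/(2λ)` one has `a/(a+β) = λ/(λ + σ‖zh‖)`.
-/

section

variable {E : Type*} [NormedAddCommGroup E] [InnerProductSpace ℝ E]

def proxObjective (a β : ℝ) (w₀ w : E) : ℝ := a * ‖w - w₀‖ ^ 2 + β * ‖w‖ ^ 2

theorem proxObjective_eq_add_inner_add_sq (a β : ℝ) (w₀ c w : E) :
    proxObjective a β w₀ w = proxObjective a β w₀ c + 2 * ⟪w - c, a • (c - w₀) + β • c⟫ +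
      (a + β) * ‖w - c‖ ^ 2 := by
  have hw₀ : ‖w - w₀‖ ^ 2 = ‖w - c‖ ^ 2 + 2 * ⟪w - c, c - w₀⟫ + ‖c - w₀‖ ^ 2 := by
    simpa using norm_add_sq_real (w - c) (c - w₀)
  have hw : ‖w‖ ^ 2 = ‖w - c‖ ^ 2 + 2 * ⟪w - c, c⟫ + ‖c‖ ^ 2 := by
    simpa using norm_add_sq_real (w - c) c
  simp only [proxObjective, inner_add_right, real_inner_smul_right, hw₀, hw]
  ring

noncomputable def proxPoint (a β : ℝ) (u w₀ : E) : E := (a / (a + β)) • (w₀ - ⟪w₀, u⟫ • u)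

theorem inner_proxPoint_eq_zero (a β : ℝ) {u : E} (hu : ‖u‖ = 1) (w₀ : E) :
    ⟪proxPoint a β u w₀, u⟫ = 0 := by
  simp [proxPoint, inner_sub_left, real_inner_smul_left, hu]

theorem smul_sub_add_smul_proxPoint {a β : ℝ} (hab : a + β ≠ 0) (u w₀ : E) :
    a • (proxPoint a β u w₀ - w₀) + β • proxPoint a β u w₀ = (-(a * ⟪w₀, u⟫)) • u := by
  unfold proxPoint
  match_scalars <;> field_simp <;> ring

theorem proxObjective_eq_proxObjective_proxPoint_add_sq {a β : ℝ} (hab : a + β ≠ 0) {u : E}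
    (hu : ‖u‖ = 1) (w₀ : E) {w : E} (hw : ⟪w, u⟫ = 0) :
    proxObjective a β w₀ w = proxObjective a β w₀ (proxPoint a β u w₀) +
      (a + β) * ‖w - proxPoint a β u w₀‖ ^ 2 := by
  have hgrad : ⟪w - proxPoint a β u w₀, a • (proxPoint a β u w₀ - w₀) + β • proxPoint a β u w₀⟫
      = 0 := by
    rw [smul_sub_add_smul_proxPoint hab, real_inner_smul_right, inner_sub_left, hw,
      inner_proxPoint_eq_zero a β hu, sub_zero, mul_zero]
  rw [proxObjective_eq_add_inner_add_sq a β w₀ (proxPoint a β u w₀) w, hgrad, mul_zero, add_zero]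

end

/-- The prox of `σ · φ_QO*` at `w₀`, where `φ_QO*(w) = (‖zh‖/(2λ))‖w‖²` on `{⟪w, zh⟫ = 0}`
and `+∞` elsewhere, is `(λ/(λ + σ‖zh‖)) • (w₀ - P_zh w₀)` : the stated point satisfies the
constraint, minimizes the objective over the constraint set, and is the unique minimizer. -/
theorem stmt_18 (b : ℕ) (zh : EuclideanSpace ℝ (Fin b)) (hzh : zh ≠ 0)
    (lam σ : ℝ) (hlam : 0 < lam) (hσ : 0 < σ)
    (w₀ c : EuclideanSpace ℝ (Fin b))
    (hc : c = (lam / (lam + σ * ‖zh‖)) • (w₀ - (⟪w₀, ‖zh‖⁻¹ • zh⟫) • (‖zh‖⁻¹ • zh))) :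
    ⟪c, zh⟫ = 0 ∧
      (∀ w : EuclideanSpace ℝ (Fin b), ⟪w, zh⟫ = 0 →
        1 / (2 * σ) * ‖c - w₀‖ ^ 2 + ‖zh‖ / (2 * lam) * ‖c‖ ^ 2 ≤
          1 / (2 * σ) * ‖w - w₀‖ ^ 2 + ‖zh‖ / (2 * lam) * ‖w‖ ^ 2) ∧
      (∀ w : EuclideanSpace ℝ (Fin b), ⟪w, zh⟫ = 0 →
        1 / (2 * σ) * ‖w - w₀‖ ^ 2 + ‖zh‖ / (2 * lam) * ‖w‖ ^ 2 =
          1 / (2 * σ) * ‖c - w₀‖ ^ 2 + ‖zh‖ / (2 * lam) * ‖c‖ ^ 2 → w = c) := by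
  set a : ℝ := 1 / (2 * σ)
  set β : ℝ := ‖zh‖ / (2 * lam)
  set u := ‖zh‖⁻¹ • zh
  have hzh' : ‖zh‖ ≠ 0 := norm_ne_zero_iff.mpr hzh
  have hu : ‖u‖ = 1 := norm_smul_inv_norm hzh
  have hab : 0 < a + β := by positivity
  have hc' : c = proxPoint a β u w₀ := by
    rw [hc, proxPoint]; congr 1; simp only [a, β]; field_simp
  have hperp : ∀ w : EuclideanSpace ℝ (Fin b), ⟪w, zh⟫ = 0 ↔ ⟪w, u⟫ = 0 := fun w => by
    simp [u, real_inner_smul_right, hzh']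
  have key : ∀ w : EuclideanSpace ℝ (Fin b), ⟪w, zh⟫ = 0 →
      proxObjective a β w₀ w = proxObjective a β w₀ c + (a + β) * ‖w - c‖ ^ 2 := fun w hw => by
    rw [hc']; exact proxObjective_eq_proxObjective_proxPoint_add_sq hab.ne' hu w₀ ((hperp w).mp hw)
  refine ⟨?_, fun w hw => ?_, fun w hw hmin => ?_⟩
  · rw [hperp, hc']; exact inner_proxPoint_eq_zero a β hu w₀
  · have h := key w hw
    unfold proxObjective at h
    have : 0 ≤ (a + β) * ‖w - c‖ ^ 2 := by positivity
    linarith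
  · have h := key w hw
    unfold proxObjective at h
    have : (a + β) * ‖w - c‖ ^ 2 = 0 := by linarith
    simpa [hab.ne', sub_eq_zero] using this
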